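/- arXiv:0911.2057 — 2 statements merged into one kernel-verified Lean document; each statement's English description precedes it below -/
import Mathlib

section
/- Define B_1 = 1 and for n > 1, B_n = Σ_{k=0}^{n-1} (k/(n-1))·binomial(2n-k-3, n-k-1)·C_k, where C_k is the k-th Catalan number. Then the composition of Catalan generating functions satisfies Y(q·Y(q)) = Σ_{n>0} B_n q^{n-1}, where Y(q) = Σ_{n≥0} C_n q^n. -/
/-- Planar binary trees. -/
inductive PBTree : Type
  | leaf : PBTree
  | node : PBTree → PBTree → PBTree
  deriving DecidableEq, Repr

namespace PBTree

instance : Inhabited PBTree := ⟨leaf⟩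

/-- Number of internal nodes. -/
def size : PBTree → ℕ
  | leaf => 0
  | node l r => l.size + r.size + 1

/-- Number of leaves. -/
def nleaves : PBTree → ℕ
  | leaf => 1
  | node l r => l.nleaves + r.nleaves

end PBTree

/-- Planar binary trees with `Bool`-labelled internal nodes; a label `true` means the
node belongs to the distinguished upper order ideal.  Bi-leveled trees are the labelled
trees satisfying `isBL` below. -/
inductive LTree : Type
  | leaf : LTree
  | node : LTree → Bool → LTree → LTree
  deriving DecidableEq, Repr

namespace LTree

instance : Inhabited LTree := ⟨leaf⟩

def size : LTree → ℕ
  | leaf => 0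
  | node l _ r => l.size + r.size + 1

def nleaves : LTree → ℕ
  | leaf => 1
  | node l _ r => l.nleaves + r.nleaves

/-- Forget the labels. -/
def forget : LTree → PBTree
  | leaf => PBTree.leaf
  | node l _ r => PBTree.node l.forget r.forget

/-- All labels are `false`. -/
def allFalse : LTree → Bool
  | leaf => true
  | node l b r => !b && l.allFalse && r.allFalse

/-- The set of `true` nodes forms an upper order ideal of the node poset
(each node is below its parent; the root is maximal). -/
def isUpperIdeal : LTree → Bool
  | leaf => true
  | node l b r => if b then l.isUpperIdeal && r.isUpperIdeal else l.allFalse && r.allFalse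

/-- The leftmost node is labelled `true` and is a minimal element of the ideal,
i.e. its descendants are all labelled `false`.  (Vacuously true for the empty tree.) -/
def leftmostMin : LTree → Bool
  | leaf => true
  | node leaf b r => b && r.allFalse
  | node l _ _ => leftmostMin l

/-- `b` is a bi-leveled tree: the `true` nodes form an upper order ideal containing
the leftmost node as a minimal element. -/
def isBL (b : LTree) : Prop := b.isUpperIdeal = true ∧ b.leftmostMin = true

end LTree

/-- The number of bi-leveled trees with `n` (internal) nodes. -/
noncomputable def blCount (n : ℕ) : ℕ :=
  {b : LTree | LTree.isBL b ∧ b.size = n}.ncard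

open PowerSeries

/-- Composition of formal power series (valid when `g` has zero constant term):
the `N`-th coefficient of `f ∘ g` is `∑_{n ≤ N} f_n · [q^N](g^n)`. -/
noncomputable def psComp (f g : PowerSeries ℚ) : PowerSeries ℚ :=
  PowerSeries.mk fun N => ∑ n ∈ Finset.range (N + 1),
    (PowerSeries.coeff n f) * PowerSeries.coeff N (g ^ n)

/-- The Catalan generating function `Y(q) = ∑ C_n q^n`. -/
noncomputable def Yser : PowerSeries ℚ := PowerSeries.mk fun n => (catalan n : ℚ)

/-- The generating function `M(q) = ∑ A_n q^n` of bi-leveled trees. -/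
noncomputable def Mser : PowerSeries ℚ := PowerSeries.mk fun n => (blCount n : ℚ)

/-- The numbers `B n`: `B 1 = 1` and for `n > 1`,
`B n = ∑_{k=0}^{n-1} (k/(n-1)) · C(2n-k-3, n-k-1) · C_k`. -/
noncomputable def Bnum : ℕ → ℚ := fun n =>
  if n = 1 then 1
  else if 2 ≤ n then
    ∑ k ∈ Finset.range n,
      ((k : ℚ) / ((n : ℚ) - 1)) * (Nat.choose (2 * n - k - 3) (n - k - 1) : ℚ) * (catalan k : ℚ)
  else 0

/-! The `m`-th coefficient of `Y(q Y(q))` is `∑_{k ≤ m} C_k [q^(m-k)] Y^k`. From `Y = 1 + q Y²`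
one gets the ballot numbers `[q^j] Y^k = C(2j+k-1, j) - C(2j+k-1, j-1) = k/(j+k) · C(2j+k-1, j)`,
and for `j = m - k` this is exactly the `k`-th summand of `B_(m+1)`. -/

namespace PowerSeries

section SqMulXAddOne

variable {R : Type*} [CommRing R] {f : R⟦X⟧}

theorem constantCoeff_eq_one_of_sq_mul_X_add_one (hf : f ^ 2 * X + 1 = f) :
    constantCoeff f = 1 := by
  simpa using (congrArg constantCoeff hf).symm

theorem pow_succ_eq_of_sq_mul_X_add_one (hf : f ^ 2 * X + 1 = f) (k : ℕ) :
    f ^ (k + 1) = f ^ k + X * f ^ (k + 2) :=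
  calc f ^ (k + 1) = f ^ k * (f ^ 2 * X + 1) := by rw [hf, pow_succ]
    _ = f ^ k + X * f ^ (k + 2) := by ring

theorem coeff_succ_pow_of_sq_mul_X_add_one (hf : f ^ 2 * X + 1 = f) (j k : ℕ) :
    coeff (j + 1) (f ^ k) =
      ((2 * j + k + 1).choose (j + 1) : R) - ((2 * j + k + 1).choose j : R) := by
  have hpow := pow_succ_eq_of_sq_mul_X_add_one hf
  induction j generalizing k with
  | zero =>
    induction k with
    | zero => simp
    | succ k ih =>
      rw [hpow, map_add, coeff_succ_X_mul, ih, coeff_zero_eq_constantCoeff_apply, map_pow,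
        constantCoeff_eq_one_of_sq_mul_X_add_one hf]
      simp only [Nat.mul_zero, Nat.zero_add, Nat.choose_one_right, Nat.choose_zero_right]
      push_cast
      ring
  | succ j ihj =>
    induction k with
    | zero =>
      rw [pow_zero, coeff_one, if_neg (by omega), Nat.add_zero, Nat.choose_symm_half, sub_self]
    | succ k ihk =>
      -- the two ballot differences telescope, and Pascal's rule splits the target's binomials
      rw [hpow, map_add, coeff_succ_X_mul, ihk, ihj,
        show 2 * (j + 1) + (k + 1) + 1 = (2 * j + k + 3) + 1 by ring,
        Nat.choose_succ_succ' (2 * j + k + 3) (j + 1), Nat.choose_succ_succ' (2 * j + k + 3) j,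
        show 2 * (j + 1) + k + 1 = 2 * j + k + 3 by ring,
        show 2 * j + (k + 2) + 1 = 2 * j + k + 3 by ring]
      push_cast
      ring

end SqMulXAddOne

theorem coeff_pow_of_sq_mul_X_add_one {K : Type*} [Field K] [CharZero K] {f : K⟦X⟧}
    (hf : f ^ 2 * X + 1 = f) {j k : ℕ} (hjk : 0 < j + k) :
    coeff j (f ^ k) = (k : K) / (j + k) * ((2 * j + k - 1).choose j : K) := by
  cases j with
  | zero =>
    have hk : (k : K) ≠ 0 := by exact_mod_cast (by omega : k ≠ 0)
    simp [coeff_zero_eq_constantCoeff_apply, constantCoeff_eq_one_of_sq_mul_X_add_one hf, hk]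
  | succ j =>
    have hjk' : (j + 1 + k : K) ≠ 0 := by exact_mod_cast hjk.ne'
    have hpascal := Nat.choose_succ_right_eq (2 * j + k + 1) j
    rw [show 2 * j + k + 1 - j = j + k + 1 by omega] at hpascal
    have hpascalK : ((2 * j + k + 1).choose (j + 1) : K) * (j + 1) =
        ((2 * j + k + 1).choose j : K) * (j + k + 1) := by exact_mod_cast hpascal
    rw [coeff_succ_pow_of_sq_mul_X_add_one hf, show 2 * (j + 1) + k - 1 = 2 * j + k + 1 by omega]
    push_cast
    field_simp
    linear_combination hpascalK

end PowerSeries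

theorem coeff_psComp_X_mul (f g : PowerSeries ℚ) (m : ℕ) :
    coeff m (psComp f (X * g)) =
      ∑ k ∈ Finset.range (m + 1), coeff k f * coeff (m - k) (g ^ k) := by
  rw [psComp, coeff_mk]
  refine Finset.sum_congr rfl fun k hk => ?_
  obtain ⟨i, rfl⟩ := Nat.exists_eq_add_of_le (Nat.lt_succ_iff.mp (Finset.mem_range.mp hk))
  rw [mul_pow, ← add_comm i, coeff_X_pow_mul, Nat.add_sub_cancel]

theorem Yser_eq_map_catalanSeries : Yser = map (Nat.castRingHom ℚ) catalanSeries := by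
  ext n
  simp [Yser]

theorem Yser_sq_mul_X_add_one : Yser ^ 2 * X + 1 = Yser := by
  simpa [Yser_eq_map_catalanSeries] using
    congrArg (map (Nat.castRingHom ℚ)) catalanSeries_sq_mul_X_add_one

/-- With `B 1 = 1` and `B n = ∑_{k=0}^{n-1} (k/(n-1))·C(2n-k-3,n-k-1)·C_k`
for `n > 1`, the composite Catalan series satisfies `Y(q·Y(q)) = ∑_{n>0} B_n q^{n-1}`. -/
theorem comp_catalan_eq_B :
    psComp Yser (PowerSeries.X * Yser) = PowerSeries.mk fun m => Bnum (m + 1) := by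
  ext m
  rw [coeff_psComp_X_mul, coeff_mk]
  rcases Nat.eq_zero_or_pos m with rfl | hm
  · simp [Bnum, Yser_eq_map_catalanSeries]
  rw [Bnum, if_neg (by omega), if_pos (by omega)]
  refine Finset.sum_congr rfl fun k hk => ?_
  have hkm : k ≤ m := Nat.lt_succ_iff.mp (Finset.mem_range.mp hk)
  rw [coeff_pow_of_sq_mul_X_add_one Yser_sq_mul_X_add_one (by omega),
    show 2 * (m + 1) - k - 3 = 2 * (m - k) + k - 1 by omega,
    show m + 1 - k - 1 = m - k by omega, Nat.cast_sub hkm]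
  simp only [Yser, coeff_mk, sub_add_cancel, Nat.cast_add, Nat.cast_one, add_sub_cancel_right]
  ring
end

section
/- The formal power series quotient M(q)/Y(q), where M(q) = Σ_{n≥0} A_n q^n is the generating function of bi-leveled trees and Y(q) is the Catalan generating function, equals 1 + Σ_{n>0} (B_n - C_{n-1}) q^n, where B_n are defined by B_1 = 1 and B_n = Σ_{k=0}^{n-1} (k/(n-1))·binomial(2n-k-3, n-k-1)·C_k for n > 1. In particular, using 1/Y(q) = 1 - q·Y(q), M(q)/Y(q) has nonnegative coefficients if B_n ≥ C_{n-1} for all n ≥ 1. -/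
open PowerSeries

/-!
Splitting a tree at its root gives functional equations for the generating functions of
all-`false` trees, `F = 1 + qF²` (so `F = Y`), of trees whose `true` nodes form an upper ideal,
`U = 1 + qU² + qY²`, and of bi-leveled trees, `M = 1 + qY + q(M - 1)U`. Each of these has a
unique solution, since `(A - B)(1 - qS) = 0` forces `A = B`. Substituting `qY` into
`Y = 1 + qY²` shows that `W = Y(qY)` satisfies `W = 1 + qYW²`, and then `U = YW` and
`M = 1 + qYW` solve the equations; hence `M/Y = (1 + qYW)(1 - qY) = 1 - qY + qW`. Finally
`[qⁿ]W = ∑ₖ Cₖ [qⁿ⁻ᵏ]Yᵏ`, and the ballot formula `[qʲ]Y^(k+1) = (k+1)/(j+k+1) · C(2j+k, j)`,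
proved from `Y^(k+2) = Y^(k+1) + qY^(k+3)` and Pascal's rule, turns this into `B (n + 1)`.
-/

open Finset

namespace PowerSeries

theorem eq_of_sub_mul_one_sub_X_mul_eq_zero {R : Type*} [CommRing R] {A B S : R⟦X⟧}
    (h : (A - B) * (1 - X * S) = 0) : A = B := by
  have hunit : IsUnit (1 - X * S) := by
    rw [isUnit_iff_constantCoeff]; simp
  exact sub_eq_zero.1 (hunit.mul_left_eq_zero.1 h)

end PowerSeries

theorem psComp_eq_subst {f g : ℚ⟦X⟧} (hg : constantCoeff g = 0) : psComp f g = f.subst g := by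
  ext N
  rw [psComp, coeff_mk, coeff_subst' (HasSubst.of_constantCoeff_zero' hg)]
  obtain ⟨h, rfl⟩ := X_dvd_iff.2 hg
  refine (finsum_eq_sum_of_support_subset _ fun d hd => ?_).symm
  rw [Function.mem_support, mul_pow, coeff_X_pow_mul'] at hd
  simp only [coe_range, Set.mem_Iio]
  by_contra hN
  exact hd (by rw [if_neg (by omega), mul_zero])

@[simp] theorem coeff_Yser (n : ℕ) : coeff n Yser = catalan n := by
  simp [Yser]

theorem constantCoeff_Yser : constantCoeff Yser = 1 := by
  simp [← coeff_zero_eq_constantCoeff_apply]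

theorem Yser_eq : Yser = 1 + X * Yser ^ 2 := by
  have hY : Yser = catalanSeries.map (Nat.castRingHom ℚ) := by ext; simp
  have := congrArg (map (Nat.castRingHom ℚ)) catalanSeries_sq_mul_X_add_one
  rw [map_add, map_mul, map_pow, map_X, map_one, ← hY] at this
  linear_combination -this

theorem coeff_Yser_pow_succ (j k : ℕ) :
    coeff j (Yser ^ (k + 1)) = (k + 1) / (j + k + 1) * (2 * j + k).choose j := by
  induction j generalizing k with
  | zero =>
    rw [coeff_zero_eq_constantCoeff_apply, map_pow, constantCoeff_Yser]
    field_simp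
    simp
  | succ j ihj =>
    induction k with
    | zero =>
      have h := succ_mul_catalan_eq_centralBinom (j + 1)
      rw [Nat.centralBinom_eq_two_mul_choose] at h
      rw [zero_add, pow_one, coeff_Yser, add_zero, ← h]
      push_cast
      field_simp
      ring
    | succ k ihk =>
      have hrec : Yser ^ (k + 2) = Yser ^ (k + 1) + X * Yser ^ (k + 3) := by
        linear_combination Yser ^ (k + 1) * Yser_eq
      rw [hrec, map_add, coeff_succ_X_mul, ihk, ihj]
      have pascal := Nat.choose_succ_succ (2 * j + k + 2) j
      have ratio := Nat.choose_succ_right_eq (2 * j + k + 2) j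
      rw [show 2 * j + k + 2 - j = j + k + 2 by omega] at ratio
      rw [show 2 * (j + 1) + (k + 1) = 2 * j + k + 2 + 1 by ring,
        show 2 * (j + 1) + k = 2 * j + k + 2 by ring, show 2 * j + (k + 2) = 2 * j + k + 2 by ring,
        pascal]
      have ratio' : ((2 * j + k + 2).choose (j + 1) : ℚ) * (j + 1) =
          (2 * j + k + 2).choose j * (j + k + 2) := by exact_mod_cast ratio
      push_cast
      field_simp
      linear_combination (-(j + k + 3 : ℚ)) * ratio'

noncomputable def Wser : ℚ⟦X⟧ := psComp Yser (X * Yser)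

theorem Wser_eq : Wser = 1 + X * Yser * Wser ^ 2 := by
  have hXY : HasSubst (X * Yser) := HasSubst.of_constantCoeff_zero' (by simp)
  have hW : Wser = substAlgHom hXY Yser := by
    rw [Wser, psComp_eq_subst (by simp), coe_substAlgHom]
  have h := congrArg (substAlgHom hXY) Yser_eq
  rw [map_add, map_mul, map_pow, map_one, substAlgHom_X, ← hW] at h
  exact h

theorem coeff_Wser (n : ℕ) : coeff n Wser = Bnum (n + 1) := by
  rw [Wser, psComp, coeff_mk]
  rcases n with _ | m
  · simp [Bnum]
  rw [Bnum, if_neg (by omega), if_pos (by omega)]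
  refine sum_congr rfl fun k hk => ?_
  rw [mem_range] at hk
  rw [coeff_Yser, mul_pow, coeff_X_pow_mul', if_pos (by omega)]
  rcases k with _ | i
  · simp
  rw [coeff_Yser_pow_succ, show 2 * (m + 1 + 1) - (i + 1) - 3 = 2 * (m + 1 - (i + 1)) + i by omega,
    show m + 1 + 1 - (i + 1) - 1 = m + 1 - (i + 1) by omega]
  rw [Nat.cast_sub (by omega : i + 1 ≤ m + 1)]
  push_cast
  ring

namespace LTree

def nodeEmb : LTree × LTree × Bool ↪ LTree :=
  ⟨fun x => node x.1 x.2.2 x.2.1, fun x y h => by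
    simp only [node.injEq] at h
    exact Prod.ext h.1 (Prod.ext h.2.2 h.2.1)⟩

@[simp] theorem nodeEmb_apply (x : LTree × LTree × Bool) : nodeEmb x = node x.1 x.2.2 x.2.1 := rfl

def ofSize : ℕ → Finset LTree
  | 0 => {leaf}
  | n + 1 => (antidiagonal n).attach.biUnion fun ij =>
      (ofSize ij.1.1 ×ˢ ofSize ij.1.2 ×ˢ (univ : Finset Bool)).map nodeEmb
  decreasing_by
    · exact Nat.antidiagonal.fst_lt ij.2
    · exact Nat.antidiagonal.snd_lt ij.2

theorem ofSize_succ (n : ℕ) : ofSize (n + 1) = (antidiagonal n).attach.biUnion fun ij =>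
    (ofSize ij.1.1 ×ˢ ofSize ij.1.2 ×ˢ (univ : Finset Bool)).map nodeEmb := by
  rw [ofSize]

@[simp] theorem mem_ofSize {t : LTree} {n : ℕ} : t ∈ ofSize n ↔ t.size = n := by
  induction t generalizing n with
  | leaf => cases n <;> simp [ofSize, size, nodeEmb]
  | node l b r ihl ihr =>
    cases n with
    | zero => simp [ofSize, size]
    | succ n =>
      simp only [ofSize_succ, mem_biUnion, mem_attach, true_and, mem_map, mem_product, mem_univ,
        and_true, nodeEmb_apply, node.injEq, size]
      constructor
      · rintro ⟨⟨⟨i, j⟩, hij⟩, ⟨l', r', b'⟩, ⟨hl, hr⟩, rfl, rfl, rfl⟩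
        have hl : l'.size = i := ihl.1 hl
        have hr : r'.size = j := ihr.1 hr
        rw [HasAntidiagonal.mem_antidiagonal] at hij
        show l'.size + r'.size + 1 = n + 1
        omega
      · intro h
        exact ⟨⟨(l.size, r.size), by simp; omega⟩, ⟨l, r, b⟩, ⟨ihl.2 rfl, ihr.2 rfl⟩, rfl, rfl, rfl⟩

theorem sum_ofSize_succ {R : Type*} [AddCommMonoid R] (f : LTree → R) (n : ℕ) :
    ∑ t ∈ ofSize (n + 1), f t =
      ∑ ij ∈ antidiagonal n, ∑ l ∈ ofSize ij.1, ∑ r ∈ ofSize ij.2, ∑ b, f (node l b r) := by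
  rw [ofSize_succ, sum_biUnion, ← sum_attach (antidiagonal n)]
  · simp [sum_product]
  · intro ij _ ij' _ hne
    simp only [Function.onFun, disjoint_left, mem_map, mem_product, nodeEmb_apply]
    rintro _ ⟨⟨l, r, b⟩, ⟨hl, hr, -⟩, rfl⟩ ⟨⟨l', r', b'⟩, ⟨hl', hr', -⟩, h⟩
    simp only [node.injEq] at h
    obtain ⟨rfl, -, rfl⟩ := h
    simp only [mem_ofSize] at hl hr hl' hr'
    exact hne (Subtype.ext (Prod.ext (hl.symm.trans hl') (hr.symm.trans hr')))

section GeneratingFunction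

variable {R : Type*} [CommSemiring R]

def gf (f : LTree → R) : R⟦X⟧ := mk fun n => ∑ t ∈ ofSize n, f t

def gf₂ (φ : LTree → LTree → R) : R⟦X⟧ :=
  mk fun n => ∑ ij ∈ antidiagonal n, ∑ l ∈ ofSize ij.1, ∑ r ∈ ofSize ij.2, φ l r

theorem gf_eq (f : LTree → R) : gf f = C (f leaf) + X * gf₂ fun l r => ∑ b, f (node l b r) := by
  ext (_ | n)
  · simp [gf, ofSize]
  · rw [gf, gf₂, map_add, coeff_succ_X_mul, coeff_C, if_neg n.succ_ne_zero, zero_add,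
      coeff_mk, coeff_mk, sum_ofSize_succ]

theorem gf₂_mul (g h : LTree → R) : gf₂ (fun l r => g l * h r) = gf g * gf h := by
  ext n
  simp only [gf₂, gf, coeff_mk, coeff_mul, sum_mul_sum]

theorem gf₂_add (φ ψ : LTree → LTree → R) :
    gf₂ (fun l r => φ l r + ψ l r) = gf₂ φ + gf₂ ψ := by
  ext n
  simp only [gf₂, coeff_mk, map_add, sum_add_distrib]

theorem gf_indicator_leaf : gf (fun t => if t = leaf then (1 : R) else 0) = 1 := by
  ext n
  simp [gf, coeff_one, size, eq_comm]

end GeneratingFunction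

theorem gf_sub {R : Type*} [CommRing R] (f g : LTree → R) :
    gf (fun t => f t - g t) = gf f - gf g := by
  ext n
  simp only [gf, coeff_mk, map_sub, sum_sub_distrib]

instance : DecidablePred isBL := fun _ => inferInstanceAs (Decidable (_ ∧ _))

theorem isUpperIdeal_of_allFalse : ∀ {t : LTree}, t.allFalse = true → t.isUpperIdeal = true
  | leaf, _ => rfl
  | node l b r, h => by
    simp only [allFalse, Bool.and_eq_true, Bool.not_eq_true'] at h
    simp [isUpperIdeal, h.1.1, h.1.2, h.2]

theorem leftmostMin_eq_false_of_allFalse :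
    ∀ {t : LTree}, t ≠ leaf → t.allFalse = true → t.leftmostMin = false
  | leaf, h, _ => absurd rfl h
  | node leaf b r, _, h => by simp_all [allFalse, leftmostMin]
  | node (node l₁ b₁ r₁) b r, _, h => by
    rw [allFalse, Bool.and_eq_true, Bool.and_eq_true] at h
    show (node l₁ b₁ r₁).leftmostMin = false
    exact leftmostMin_eq_false_of_allFalse (by simp) h.1.2

theorem not_isBL_node_false (l r : LTree) : ¬ (node l false r).isBL := by
  rintro ⟨hU, hL⟩
  simp only [isUpperIdeal, Bool.false_eq_true, if_false, Bool.and_eq_true] at hU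
  rcases l with _ | ⟨l₁, b₁, r₁⟩
  · simp [leftmostMin] at hL
  · change (node l₁ b₁ r₁).leftmostMin = true at hL
    rw [leftmostMin_eq_false_of_allFalse (by simp) hU.1] at hL
    exact Bool.false_ne_true hL

theorem isBL_node_leaf (r : LTree) : (node leaf true r).isBL ↔ r.allFalse = true := by
  simp only [isBL, isUpperIdeal, leftmostMin, if_true, Bool.true_and]
  exact ⟨And.right, fun h => ⟨isUpperIdeal_of_allFalse h, h⟩⟩

theorem isBL_node_of_ne_leaf {l : LTree} (hl : l ≠ leaf) (r : LTree) :
    (node l true r).isBL ↔ l.isBL ∧ r.isUpperIdeal = true := by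
  rcases l with _ | ⟨l₁, b₁, r₁⟩
  · exact absurd rfl hl
  · simp only [isBL, isUpperIdeal, if_true, Bool.and_eq_true]
    exact ⟨fun ⟨⟨h₁, h₂⟩, h₃⟩ => ⟨⟨h₁, h₃⟩, h₂⟩, fun ⟨⟨h₁, h₃⟩, h₂⟩ => ⟨⟨h₁, h₂⟩, h₃⟩⟩

def count (p : LTree → Prop) [DecidablePred p] : ℚ⟦X⟧ := gf fun t => if p t then 1 else 0

theorem count_eq (p : LTree → Prop) [DecidablePred p] :
    count p = C (if p leaf then 1 else 0) +
      X * gf₂ fun l r => ∑ b, if p (node l b r) then 1 else 0 :=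
  gf_eq _

theorem count_allFalse :
    count (allFalse · = true) = 1 + X * count (allFalse · = true) ^ 2 := by
  have hnode : (fun l r => ∑ b, if (node l b r).allFalse = true then (1 : ℚ) else 0) =
      fun l r => (if l.allFalse = true then 1 else 0) * (if r.allFalse = true then 1 else 0) := by
    funext l r
    rw [Fintype.sum_bool]
    simp only [allFalse, ite_zero_mul_ite_zero]
    split_ifs <;> simp_all
  conv_lhs => rw [count_eq, hnode, gf₂_mul]
  simp [count, allFalse, sq]

theorem count_isUpperIdeal : count (isUpperIdeal · = true) =
    1 + X * count (isUpperIdeal · = true) ^ 2 + X * count (allFalse · = true) ^ 2 := by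
  have hnode : (fun l r => ∑ b, if (node l b r).isUpperIdeal = true then (1 : ℚ) else 0) =
      fun l r => (if l.isUpperIdeal = true then 1 else 0) * (if r.isUpperIdeal = true then 1 else 0) +
        (if l.allFalse = true then 1 else 0) * (if r.allFalse = true then 1 else 0) := by
    funext l r
    rw [Fintype.sum_bool]
    simp only [isUpperIdeal, ite_zero_mul_ite_zero]
    split_ifs <;> simp_all
  conv_lhs => rw [count_eq, hnode, gf₂_add, gf₂_mul, gf₂_mul]
  simp [count, isUpperIdeal, sq, mul_add, add_assoc]

theorem count_isBL : count isBL =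
    1 + X * count (allFalse · = true) + X * ((count isBL - 1) * count (isUpperIdeal · = true)) := by
  have hnode : (fun l r => ∑ b, if (node l b r).isBL then (1 : ℚ) else 0) =
      fun l r => (if l = leaf then 1 else 0) * (if r.allFalse = true then 1 else 0) +
        ((if l.isBL then 1 else 0) - (if l = leaf then 1 else 0)) *
          (if r.isUpperIdeal = true then 1 else 0) := by
    funext l r
    -- `leaf` is bi-leveled, so the second weight counts the nonempty bi-leveled trees.
    rw [Fintype.sum_bool, if_neg (not_isBL_node_false l r), add_zero]
    by_cases hl : l = leaf
    · have hleaf : leaf.isBL := ⟨rfl, rfl⟩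
      subst hl
      simp only [isBL_node_leaf, hleaf, if_true, sub_self, zero_mul, add_zero, one_mul]
    · simp only [isBL_node_of_ne_leaf hl, hl, if_false, zero_mul, zero_add, sub_zero,
        ite_zero_mul_ite_zero, mul_one]
  conv_lhs => rw [count_eq, hnode, gf₂_add, gf₂_mul, gf₂_mul, gf_sub, gf_indicator_leaf]
  simp [count, isBL, isUpperIdeal, leftmostMin]
  ring

end LTree

open LTree

theorem count_allFalse_eq_Yser : count (allFalse · = true) = Yser :=
  eq_of_sub_mul_one_sub_X_mul_eq_zero (S := count (allFalse · = true) + Yser) <| by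
    linear_combination count_allFalse - Yser_eq

theorem count_isUpperIdeal_eq : count (isUpperIdeal · = true) = Yser * Wser :=
  eq_of_sub_mul_one_sub_X_mul_eq_zero (S := count (isUpperIdeal · = true) + Yser * Wser) <| by
    have h := count_isUpperIdeal
    rw [count_allFalse_eq_Yser] at h
    linear_combination h - Yser * Wser_eq - Yser_eq

theorem Mser_eq_count_isBL : Mser = count isBL := by
  ext n
  have hset : {b : LTree | b.isBL ∧ b.size = n} = ((ofSize n).filter isBL : Set LTree) := by
    ext t
    simp [and_comm]
  rw [Mser, coeff_mk, blCount, hset, Set.ncard_coe_finset]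
  simp [count, gf, sum_boole]

theorem Mser_eq : Mser = 1 + X * Yser * Wser :=
  eq_of_sub_mul_one_sub_X_mul_eq_zero (S := Yser * Wser) <| by
    rw [Mser_eq_count_isBL]
    have h := count_isBL
    rw [count_allFalse_eq_Yser, count_isUpperIdeal_eq] at h
    linear_combination h - X * Yser * Wser_eq

theorem Mser_mul_inv_Yser : Mser * Yser⁻¹ = 1 - X * Yser + X * Wser := by
  rw [eq_comm, PowerSeries.eq_mul_inv_iff_mul_eq (by simp [constantCoeff_Yser]), Mser_eq]
  linear_combination Yser_eq

/-- `M(q)/Y(q) = 1 + ∑_{n>0} (B_n - C_{n-1}) q^n`; in particular, if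
`B_n ≥ C_{n-1}` for all `n ≥ 1` then `M(q)/Y(q)` has nonnegative coefficients. -/
theorem Mser_div_Yser :
    Mser * Yser⁻¹ =
      PowerSeries.mk (fun n => if n = 0 then (1 : ℚ) else Bnum n - (catalan (n - 1) : ℚ)) ∧
    ((∀ n : ℕ, 1 ≤ n → (catalan (n - 1) : ℚ) ≤ Bnum n) →
      ∀ n : ℕ, 0 ≤ PowerSeries.coeff n (Mser * Yser⁻¹)) := by
  have hcoeff : Mser * Yser⁻¹ =
      PowerSeries.mk (fun n => if n = 0 then (1 : ℚ) else Bnum n - (catalan (n - 1) : ℚ)) := by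
    rw [Mser_mul_inv_Yser]
    ext (_ | n)
    · simp
    · simp [coeff_Wser, sub_eq_neg_add]
  refine ⟨hcoeff, fun hB n => ?_⟩
  rw [hcoeff, coeff_mk]
  split_ifs with hn
  · exact zero_le_one
  · exact sub_nonneg.2 (hB n (Nat.one_le_iff_ne_zero.2 hn))
end
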